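/- arXiv:2310.09179 — 2 statements merged into one kernel-verified Lean document; each statement's English description precedes it below -/
import Mathlib

section
/- Let n ≥ 1 and let A : ℝ → Matrix (Fin n) (Fin n) ℝ be infinitely differentiable, and fix t₀ ∈ ℝ. Then, as h → 0, exp(∫_{t₀+h/2}^{t₀+h} A(s) ds) = 1 + (h/2)·A(t₀) + (h²/8)·(3·Ȧ(t₀) + A(t₀)²) + O(h³). -/
set_option maxHeartbeats 1000000

/- Local norm instances for matrices (entrywise sup norm). -/
attribute [local instance] Matrix.normedAddCommGroup Matrix.normedSpace

open scoped ContDiff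

namespace MexpAux

open NormedSpace


variable {n : ℕ}

lemma norm_mul_le' (X Y : Matrix (Fin n) (Fin n) ℝ) :
    ‖X * Y‖ ≤ n * ‖X‖ * ‖Y‖ := by
  refine (Matrix.norm_le_iff (by positivity)).2 fun i j => ?_
  rw [Matrix.mul_apply]
  calc ‖∑ k, X i k * Y k j‖ ≤ ∑ k : Fin n, ‖X i k * Y k j‖ := norm_sum_le _ _
    _ ≤ ∑ _k : Fin n, ‖X‖ * ‖Y‖ := by
        refine Finset.sum_le_sum fun k _ => ?_
        rw [norm_mul]
        exact mul_le_mul (Matrix.norm_entry_le_entrywise_sup_norm X)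
          (Matrix.norm_entry_le_entrywise_sup_norm Y) (norm_nonneg _) (norm_nonneg _)
    _ = n * ‖X‖ * ‖Y‖ := by simp [Finset.sum_const, mul_assoc]

lemma norm_one_le : ‖(1 : Matrix (Fin n) (Fin n) ℝ)‖ ≤ 1 := by
  refine (Matrix.norm_le_iff zero_le_one).2 fun i j => ?_
  rw [Matrix.one_apply]
  split <;> simp

lemma norm_pow_le (X : Matrix (Fin n) (Fin n) ℝ) (k : ℕ) :
    ‖X ^ k‖ ≤ (n * ‖X‖) ^ k := by
  induction k with
  | zero => simpa using norm_one_le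
  | succ k ih =>
    calc ‖X ^ (k + 1)‖ = ‖X * X ^ k‖ := by rw [pow_succ']
      _ ≤ n * ‖X‖ * ‖X ^ k‖ := norm_mul_le' _ _
      _ ≤ n * ‖X‖ * (n * ‖X‖) ^ k := by
          refine mul_le_mul_of_nonneg_left ih (by positivity)
      _ = (n * ‖X‖) ^ (k + 1) := by ring

lemma summable_exp_terms (X : Matrix (Fin n) (Fin n) ℝ) :
    Summable (fun k : ℕ => ((k.factorial : ℝ)⁻¹) • X ^ k) := by
  refine Summable.of_norm_bounded ((Real.summable_pow_div_factorial (n * ‖X‖))) fun k => ?_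
  rw [norm_smul, norm_inv, Real.norm_natCast, div_eq_inv_mul]
  exact mul_le_mul_of_nonneg_left (norm_pow_le X k) (by positivity)

lemma exp_tail_bound (X : Matrix (Fin n) (Fin n) ℝ) :
    ‖exp X - (1 + X + (2⁻¹ : ℝ) • X ^ 2)‖
      ≤ (n * ‖X‖) ^ 3 * Real.exp (n * ‖X‖) := by
  have hsum := summable_exp_terms X
  have hsplit := Summable.sum_add_tsum_nat_add (f := fun k : ℕ => ((k.factorial : ℝ)⁻¹) • X ^ k) 3 hsum
  have hhead : (∑ k ∈ Finset.range 3, ((k.factorial : ℝ)⁻¹) • X ^ k)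
      = 1 + X + (2⁻¹ : ℝ) • X ^ 2 := by
    simp [Finset.sum_range_succ, Nat.factorial]
  have hexp : exp X = ∑' k : ℕ, ((k.factorial : ℝ)⁻¹) • X ^ k := by
    rw [exp_eq_tsum ℝ]
  have heq : exp X - (1 + X + (2⁻¹ : ℝ) • X ^ 2)
      = ∑' k : ℕ, ((k + 3).factorial : ℝ)⁻¹ • X ^ (k + 3) := by
    rw [hexp, ← hsplit, hhead]; abel
  rw [heq]
  have hsum3 : Summable (fun k : ℕ => ((k + 3).factorial : ℝ)⁻¹ • X ^ (k + 3)) :=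
    (summable_nat_add_iff 3).2 hsum
  calc ‖∑' k : ℕ, ((k + 3).factorial : ℝ)⁻¹ • X ^ (k + 3)‖
      ≤ ∑' k : ℕ, ‖((k + 3).factorial : ℝ)⁻¹ • X ^ (k + 3)‖ :=
        norm_tsum_le_tsum_norm hsum3.norm
    _ ≤ ∑' k : ℕ, (n * ‖X‖) ^ 3 * ((n * ‖X‖) ^ k / k.factorial) := by
        refine Summable.tsum_le_tsum (fun k => ?_) hsum3.norm ?_
        · rw [norm_smul, norm_inv, Real.norm_natCast]
          calc (((k + 3).factorial : ℝ))⁻¹ * ‖X ^ (k + 3)‖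
              ≤ ((k.factorial : ℝ))⁻¹ * (n * ‖X‖) ^ (k + 3) := by
                have h1 : (((k + 3).factorial : ℝ))⁻¹ ≤ ((k.factorial : ℝ))⁻¹ := by
                  apply inv_anti₀ (by positivity)
                  exact_mod_cast Nat.factorial_le (by omega)
                exact mul_le_mul h1 (norm_pow_le X _) (norm_nonneg _) (by positivity)
            _ = (n * ‖X‖) ^ 3 * ((n * ‖X‖) ^ k / k.factorial) := by
                rw [pow_add]; field_simp
        · exact (Real.summable_pow_div_factorial (n * ‖X‖)).mul_left _
    _ = (n * ‖X‖) ^ 3 * Real.exp (n * ‖X‖) := by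
        rw [tsum_mul_left, Real.exp_eq_exp_ℝ, exp_eq_tsum_div]



variable {E : Type*} [NormedAddCommGroup E] [NormedSpace ℝ E]

lemma abs_le_of_mem_uIcc {s h : ℝ} (hs : s ∈ Set.uIcc 0 h) : |s| ≤ |h| := by
  rw [abs_le]
  rcases Set.mem_uIcc.mp hs with ⟨h1, h2⟩ | ⟨h1, h2⟩ <;>
    constructor <;> linarith [neg_abs_le h, le_abs_self h, abs_nonneg h]

lemma mvt_step (f : ℝ → E) (hf : Differentiable ℝ f) (h0 : f 0 = 0) {K h : ℝ}
    (hK : ∀ t ∈ Set.uIcc 0 h, ‖deriv f t‖ ≤ K) : ‖f h‖ ≤ K * |h| := by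
  have := Convex.norm_image_sub_le_of_norm_hasDerivWithin_le
    (f := f) (f' := deriv f) (s := Set.uIcc 0 h)
    (fun t _ => (hf t).hasDerivAt.hasDerivWithinAt) hK (convex_uIcc 0 h)
    Set.left_mem_uIcc Set.right_mem_uIcc
  simpa [h0, Real.norm_eq_abs] using this

lemma third_order (g : ℝ → E) (hg : ContDiff ℝ ∞ g) (h0 : g 0 = 0)
    (h1 : deriv g 0 = 0) (h2 : deriv (deriv g) 0 = 0) :
    ∃ C > (0 : ℝ), ∀ h : ℝ, |h| ≤ 1 → ‖g h‖ ≤ C * |h| ^ 3 := by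
  have hg1 : ContDiff ℝ ∞ (deriv g) := (contDiff_infty_iff_deriv.mp hg).2
  have hg2 : ContDiff ℝ ∞ (deriv (deriv g)) := (contDiff_infty_iff_deriv.mp hg1).2
  have hg3c : Continuous (deriv (deriv (deriv g))) :=
    ((contDiff_infty_iff_deriv.mp hg2).2).continuous
  obtain ⟨K, hK⟩ := isCompact_Icc.exists_bound_of_continuousOn
    (s := Set.Icc (-1 : ℝ) 1) hg3c.continuousOn
  set K' : ℝ := max K 0 + 1 with hK'
  have hK'pos : 0 < K' := by positivity
  have hKK' : ∀ t : ℝ, |t| ≤ 1 → ‖deriv (deriv (deriv g)) t‖ ≤ K' := fun t ht => by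
    refine le_trans (hK t (abs_le.mp ht |> fun h => Set.mem_Icc.mpr h)) ?_
    simp [hK']; linarith [le_max_left K (0:ℝ)]
  have hb2 : ∀ t : ℝ, |t| ≤ 1 → ‖deriv (deriv g) t‖ ≤ K' * |t| := by
    intro t ht
    refine mvt_step _ (hg2.differentiable (by simp)) h2 fun s hs => ?_
    exact hKK' s (le_trans (abs_le_of_mem_uIcc hs) ht)
  have hb1 : ∀ t : ℝ, |t| ≤ 1 → ‖deriv g t‖ ≤ K' * |t| ^ 2 := by
    intro t ht
    have : ‖deriv g t‖ ≤ K' * |t| * |t| := by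
      refine mvt_step _ (hg1.differentiable (by simp)) h1 fun s hs => ?_
      refine le_trans (hb2 s (le_trans (abs_le_of_mem_uIcc hs) ht)) ?_
      exact mul_le_mul_of_nonneg_left (abs_le_of_mem_uIcc hs) hK'pos.le
    calc ‖deriv g t‖ ≤ K' * |t| * |t| := this
      _ = K' * |t| ^ 2 := by ring
  refine ⟨K', hK'pos, fun h hh => ?_⟩
  have : ‖g h‖ ≤ K' * |h| ^ 2 * |h| := by
    refine mvt_step _ (hg.differentiable (by simp)) h0 fun s hs => ?_
    refine le_trans (hb1 s (le_trans (abs_le_of_mem_uIcc hs) hh)) ?_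
    have := abs_le_of_mem_uIcc hs
    have h2' : |s| ^ 2 ≤ |h| ^ 2 := by nlinarith [abs_nonneg s, abs_nonneg h]
    exact mul_le_mul_of_nonneg_left h2' hK'pos.le
  calc ‖g h‖ ≤ K' * |h| ^ 2 * |h| := this
    _ = K' * |h| ^ 3 := by ring

lemma integral_taylor (A : ℝ → Matrix (Fin n) (Fin n) ℝ) (hA : ContDiff ℝ ∞ A) (t₀ : ℝ) :
    ∃ C > (0 : ℝ), ∀ h : ℝ, |h| ≤ 1 →
      ‖(∫ s in (t₀ + h / 2)..(t₀ + h), A s) - (h / 2) • A t₀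
          - (3 * h ^ 2 / 8) • deriv A t₀‖ ≤ C * |h| ^ 3 := by
  have hAc : Continuous A := hA.continuous
  have hA1 : ContDiff ℝ ∞ (deriv A) := (contDiff_infty_iff_deriv.mp hA).2
  have hAd : ∀ x, HasDerivAt A (deriv A x) x := fun x =>
    ((hA.differentiable (by simp)) x).hasDerivAt
  set F : ℝ → Matrix (Fin n) (Fin n) ℝ := fun x => ∫ s in t₀..x, A s with hFdef
  have hFd : ∀ x, HasDerivAt F (A x) x := fun x =>
    (hAc.integral_hasStrictDerivAt t₀ x).hasDerivAt
  have hFsmooth : ContDiff ℝ ∞ F := by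
    refine contDiff_infty_iff_deriv.2 ⟨fun x => (hFd x).differentiableAt, ?_⟩
    have : deriv F = A := funext fun x => (hFd x).deriv
    exact (congrArg (ContDiff ℝ ∞) this).mpr hA
  set g : ℝ → Matrix (Fin n) (Fin n) ℝ :=
    fun h => F (t₀ + h) - F (t₀ + h / 2) - (h / 2) • A t₀
      - (3 * h ^ 2 / 8) • deriv A t₀ with hgdef
  -- inner scalar derivatives
  have hi1 : ∀ h : ℝ, HasDerivAt (fun x : ℝ => t₀ + x) 1 h := fun h =>
    (hasDerivAt_id h).const_add t₀
  have hi2 : ∀ h : ℝ, HasDerivAt (fun x : ℝ => t₀ + x / 2) (1 / 2) h := fun h =>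
    ((hasDerivAt_id h).div_const 2).const_add t₀
  -- derivative of g
  have hc1 : ∀ h : ℝ, HasDerivAt (fun x : ℝ => F (t₀ + x)) (A (t₀ + h)) h := fun h => by
    have := (hFd (t₀ + h)).scomp h (hi1 h); rw [one_smul] at this; exact this
  have hc2 : ∀ h : ℝ, HasDerivAt (fun x : ℝ => F (t₀ + x / 2))
      ((1 / 2 : ℝ) • A (t₀ + h / 2)) h := fun h =>
    by exact (hFd (t₀ + h / 2)).scomp h (hi2 h)
  have hc3 : ∀ h : ℝ, HasDerivAt (fun x : ℝ => (x / 2) • A t₀) ((1 / 2 : ℝ) • A t₀) h :=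
    fun h => by
      have := ((hasDerivAt_id h).div_const 2).smul_const (A t₀)
      simp at this ⊢; exact this
  have hc4 : ∀ h : ℝ, HasDerivAt (fun x : ℝ => (3 * x ^ 2 / 8) • deriv A t₀)
      ((3 * h / 4) • deriv A t₀) h := fun h => by
    have hs : HasDerivAt (fun x : ℝ => 3 * x ^ 2 / 8) (3 * h / 4) h := by
      have := ((hasDerivAt_pow 2 h).const_mul 3).div_const 8
      refine this.congr_deriv ?_
      push_cast; ring
    exact hs.smul_const (deriv A t₀)
  set g1 : ℝ → Matrix (Fin n) (Fin n) ℝ :=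
    fun h => A (t₀ + h) - (1 / 2 : ℝ) • A (t₀ + h / 2) - (1 / 2 : ℝ) • A t₀
      - (3 * h / 4) • deriv A t₀ with hg1def
  have hgd : ∀ h : ℝ, HasDerivAt g (g1 h) h := fun h =>
    (((hc1 h).sub (hc2 h)).sub (hc3 h)).sub (hc4 h)
  have hderivg : deriv g = g1 := funext fun h => (hgd h).deriv
  -- derivative of g1
  have hd1 : ∀ h : ℝ, HasDerivAt (fun x : ℝ => A (t₀ + x)) (deriv A (t₀ + h)) h := fun h => by
    have := (hAd (t₀ + h)).scomp h (hi1 h); rw [one_smul] at this; exact this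
  have hd2 : ∀ h : ℝ, HasDerivAt (fun x : ℝ => (1 / 2 : ℝ) • A (t₀ + x / 2))
      ((1 / 2 : ℝ) • ((1 / 2 : ℝ) • deriv A (t₀ + h / 2))) h := fun h =>
    ((hAd (t₀ + h / 2)).scomp h (hi2 h)).const_smul (1 / 2 : ℝ)
  have hd4 : ∀ h : ℝ, HasDerivAt (fun x : ℝ => (3 * x / 4) • deriv A t₀)
      ((3 / 4 : ℝ) • deriv A t₀) h := fun h => by
    have hs : HasDerivAt (fun x : ℝ => 3 * x / 4) (3 / 4) h := by
      have := ((hasDerivAt_id h).const_mul 3).div_const 4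
      refine this.congr_deriv ?_
      ring
    exact hs.smul_const (deriv A t₀)
  have hg1d : ∀ h : ℝ, HasDerivAt g1
      (deriv A (t₀ + h) - (1 / 2 : ℝ) • ((1 / 2 : ℝ) • deriv A (t₀ + h / 2)) - 0
        - (3 / 4 : ℝ) • deriv A t₀) h := fun h =>
    (((hd1 h).sub (hd2 h)).sub (hasDerivAt_const h _)).sub (hd4 h)
  -- smoothness of g
  have hgsmooth : ContDiff ℝ ∞ g := by
    refine ((ContDiff.sub (ContDiff.sub ?_ ?_) ?_).sub ?_)
    · exact hFsmooth.comp (contDiff_const.add contDiff_id)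
    · exact hFsmooth.comp (contDiff_const.add (contDiff_id.div_const 2))
    · exact (contDiff_id.div_const 2).smul contDiff_const
    · exact ((contDiff_const.mul (contDiff_id.pow 2)).div_const 8).smul contDiff_const
  -- values at 0
  have h0 : g 0 = 0 := by simp [hgdef]
  have h1 : deriv g 0 = 0 := by
    rw [hderivg, hg1def]
    simp only [add_zero, zero_div, mul_zero, zero_mul]
    module
  have h2 : deriv (deriv g) 0 = 0 := by
    rw [hderivg, show deriv g1 0 = _ from (hg1d 0).deriv]
    simp only [add_zero, zero_div]
    module
  obtain ⟨C, hCpos, hC⟩ := third_order g hgsmooth h0 h1 h2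
  refine ⟨C, hCpos, fun h hh => ?_⟩
  have hint : (∫ s in (t₀ + h / 2)..(t₀ + h), A s) = F (t₀ + h) - F (t₀ + h / 2) :=
    (intervalIntegral.integral_interval_sub_left (hAc.intervalIntegrable t₀ (t₀ + h))
      (hAc.intervalIntegrable t₀ (t₀ + h / 2))).symm
  have : (∫ s in (t₀ + h / 2)..(t₀ + h), A s) - (h / 2) • A t₀
      - (3 * h ^ 2 / 8) • deriv A t₀ = g h := by rw [hint, hgdef]
  rw [this]
  exact hC h hh


end MexpAux

open MexpAux in
open NormedSpace in
/-- Taylor expansion of `exp (∫_{t₀+h/2}^{t₀+h} A(s) ds)` through order `h²` with an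
`O(h³)` remainder, for a smooth matrix-valued map `A`. -/
theorem matrix_exp_integral_second_half_step_expansion
    (n : ℕ) (hn : 1 ≤ n) (A : ℝ → Matrix (Fin n) (Fin n) ℝ)
    (hA : ContDiff ℝ (⊤ : ℕ∞) A) (t₀ : ℝ) :
    ∃ C > (0 : ℝ), ∃ δ > (0 : ℝ), ∀ h : ℝ, |h| ≤ δ →
      ‖exp (∫ s in (t₀ + h / 2)..(t₀ + h), A s) -
          (1 + (h / 2) • A t₀ + (h ^ 2 / 8) • ((3 : ℝ) • deriv A t₀ + A t₀ ^ 2))‖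
        ≤ C * |h| ^ 3 := by
  have hA' : ContDiff ℝ ∞ A := hA.of_le (by simp)
  obtain ⟨C₁, hC₁pos, hC₁⟩ := integral_taylor A hA' t₀
  obtain ⟨C₂, hC₂def⟩ : ∃ c : ℝ, c = C₁ + 3 / 8 * ‖deriv A t₀‖ + 1 := ⟨_, rfl⟩
  have hC₂pos : 0 < C₂ := by rw [hC₂def]; positivity
  obtain ⟨C₃, hC₃def⟩ : ∃ c : ℝ, c = C₂ + ‖A t₀‖ / 2 := ⟨_, rfl⟩
  have hC₃pos : 0 < C₃ := by rw [hC₃def]; positivity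
  refine ⟨(n : ℝ) ^ 3 * C₃ ^ 3 * Real.exp (n * C₃) + C₁ + n * C₂ * C₃ + 1, by positivity,
    1, one_pos, fun h hh => ?_⟩
  obtain ⟨X, hXdef⟩ : ∃ M : Matrix (Fin n) (Fin n) ℝ,
    M = ∫ s in (t₀ + h / 2)..(t₀ + h), A s := ⟨_, rfl⟩
  obtain ⟨L, hLdef⟩ : ∃ M : Matrix (Fin n) (Fin n) ℝ, M = (h / 2) • A t₀ := ⟨_, rfl⟩
  rw [← hXdef, ← hLdef]
  have hgb := hC₁ h hh
  rw [← hXdef, ← hLdef] at hgb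
  obtain ⟨r, hrdef⟩ : ∃ M : Matrix (Fin n) (Fin n) ℝ, M = X - L := ⟨_, rfl⟩
  rw [← hrdef] at hgb
  have habs : (0 : ℝ) ≤ |h| := abs_nonneg h
  have hn0 : (0 : ℝ) ≤ (n : ℝ) := Nat.cast_nonneg n
  -- bound on r
  have hrb : ‖r‖ ≤ C₂ * |h| ^ 2 := by
    have h1 : ‖r‖ ≤ ‖r - (3 * h ^ 2 / 8) • deriv A t₀‖ + ‖(3 * h ^ 2 / 8) • deriv A t₀‖ := by
      have : r = (r - (3 * h ^ 2 / 8) • deriv A t₀) + (3 * h ^ 2 / 8) • deriv A t₀ := by abel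
      nth_rewrite 1 [this]; exact norm_add_le _ _
    have h2 : ‖(3 * h ^ 2 / 8) • deriv A t₀‖ = 3 * |h| ^ 2 / 8 * ‖deriv A t₀‖ := by
      rw [norm_smul, Real.norm_eq_abs, abs_div, abs_mul, abs_pow]
      simp [abs_of_nonneg]
    have h4 : |h| ^ 3 ≤ |h| ^ 2 := by nlinarith
    calc ‖r‖ ≤ C₁ * |h| ^ 3 + 3 * |h| ^ 2 / 8 * ‖deriv A t₀‖ := by
          rw [h2] at h1; linarith [hgb]
      _ ≤ C₁ * |h| ^ 2 + 3 / 8 * ‖deriv A t₀‖ * |h| ^ 2 + 1 * |h| ^ 2 := by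
          linarith [mul_le_mul_of_nonneg_left h4 hC₁pos.le, pow_nonneg habs 2]
      _ = C₂ * |h| ^ 2 := by rw [hC₂def]; ring
  -- bound on X
  have hLnorm : ‖L‖ = |h| / 2 * ‖A t₀‖ := by
    rw [hLdef, norm_smul, Real.norm_eq_abs, abs_div]
    simp [abs_of_nonneg]
  have hXb : ‖X‖ ≤ C₃ * |h| := by
    have h1 : ‖X‖ ≤ ‖r‖ + ‖L‖ := by
      have : X = r + L := by rw [hrdef]; abel
      rw [this]; exact norm_add_le _ _
    have h2 : |h| ^ 2 ≤ |h| := by nlinarith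
    calc ‖X‖ ≤ C₂ * |h| ^ 2 + |h| / 2 * ‖A t₀‖ := by rw [hLnorm] at h1; linarith
      _ ≤ C₂ * |h| + ‖A t₀‖ / 2 * |h| := by
          linarith [mul_le_mul_of_nonneg_left h2 hC₂pos.le]
      _ = C₃ * |h| := by rw [hC₃def]; ring
  -- decomposition
  have key : exp X - (1 + L + (h ^ 2 / 8) • ((3 : ℝ) • deriv A t₀ + A t₀ ^ 2))
      = (exp X - (1 + X + (2⁻¹ : ℝ) • X ^ 2))
        + (r - (3 * h ^ 2 / 8) • deriv A t₀)
        + (2⁻¹ : ℝ) • (X ^ 2 - (h ^ 2 / 4) • A t₀ ^ 2) := by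
    rw [hrdef, hLdef]; module
  -- tail bound
  have hXC₃ : ‖X‖ ≤ C₃ := by
    refine hXb.trans ?_
    calc C₃ * |h| ≤ C₃ * 1 := mul_le_mul_of_nonneg_left hh hC₃pos.le
      _ = C₃ := mul_one C₃
  have hT1 : ‖exp X - (1 + X + (2⁻¹ : ℝ) • X ^ 2)‖
      ≤ (n : ℝ) ^ 3 * C₃ ^ 3 * Real.exp (n * C₃) * |h| ^ 3 := by
    refine (exp_tail_bound X).trans ?_
    have e1 : ((n : ℝ) * ‖X‖) ^ 3 ≤ ((n : ℝ) * (C₃ * |h|)) ^ 3 :=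
      pow_le_pow_left₀ (by positivity) (mul_le_mul_of_nonneg_left hXb hn0) 3
    have e2 : Real.exp ((n : ℝ) * ‖X‖) ≤ Real.exp ((n : ℝ) * C₃) :=
      Real.exp_le_exp.2 (mul_le_mul_of_nonneg_left hXC₃ hn0)
    calc ((n : ℝ) * ‖X‖) ^ 3 * Real.exp ((n : ℝ) * ‖X‖)
        ≤ ((n : ℝ) * (C₃ * |h|)) ^ 3 * Real.exp ((n : ℝ) * C₃) :=
          mul_le_mul e1 e2 (Real.exp_pos _).le (by positivity)
      _ = (n : ℝ) ^ 3 * C₃ ^ 3 * Real.exp ((n : ℝ) * C₃) * |h| ^ 3 := by ring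
  -- square part
  have hLL : L * L = (h ^ 2 / 4) • A t₀ ^ 2 := by
    rw [hLdef, smul_mul_smul_comm, ← pow_two (A t₀)]
    congr 1
    ring
  have hdecomp : X ^ 2 - (h ^ 2 / 4) • A t₀ ^ 2 = X * r + r * L := by
    rw [pow_two, ← hLL, hrdef, mul_sub, sub_mul]
    abel
  have hT3 : ‖(2⁻¹ : ℝ) • (X ^ 2 - (h ^ 2 / 4) • A t₀ ^ 2)‖ ≤ n * C₂ * C₃ * |h| ^ 3 := by
    rw [norm_smul, Real.norm_eq_abs, show |(2⁻¹ : ℝ)| = 2⁻¹ by norm_num]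
    have h1 : ‖X ^ 2 - (h ^ 2 / 4) • A t₀ ^ 2‖ ≤ n * ‖X‖ * ‖r‖ + n * ‖r‖ * ‖L‖ := by
      rw [hdecomp]
      exact (norm_add_le _ _).trans (add_le_add (norm_mul_le' X r) (norm_mul_le' r L))
    have hL3 : ‖L‖ ≤ C₃ * |h| := by
      rw [hLnorm, hC₃def]
      nlinarith [norm_nonneg (A t₀), hC₂pos.le]
    have h2 : (n : ℝ) * ‖X‖ * ‖r‖ ≤ n * ((C₃ * |h|) * (C₂ * |h| ^ 2)) := by
      have e := mul_le_mul hXb hrb (norm_nonneg r) (by positivity)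
      calc (n : ℝ) * ‖X‖ * ‖r‖ = n * (‖X‖ * ‖r‖) := by ring
        _ ≤ n * ((C₃ * |h|) * (C₂ * |h| ^ 2)) := mul_le_mul_of_nonneg_left e hn0
    have h3 : (n : ℝ) * ‖r‖ * ‖L‖ ≤ n * ((C₂ * |h| ^ 2) * (C₃ * |h|)) := by
      have e := mul_le_mul hrb hL3 (norm_nonneg L) (by positivity)
      calc (n : ℝ) * ‖r‖ * ‖L‖ = n * (‖r‖ * ‖L‖) := by ring
        _ ≤ n * ((C₂ * |h| ^ 2) * (C₃ * |h|)) := mul_le_mul_of_nonneg_left e hn0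
    have h4 : (n : ℝ) * ((C₃ * |h|) * (C₂ * |h| ^ 2)) = n * C₂ * C₃ * |h| ^ 3 := by ring
    have h5 : (n : ℝ) * ((C₂ * |h| ^ 2) * (C₃ * |h|)) = n * C₂ * C₃ * |h| ^ 3 := by ring
    linarith
  -- final
  calc ‖exp X - (1 + L + (h ^ 2 / 8) • ((3 : ℝ) • deriv A t₀ + A t₀ ^ 2))‖
      ≤ ‖exp X - (1 + X + (2⁻¹ : ℝ) • X ^ 2)‖
        + ‖r - (3 * h ^ 2 / 8) • deriv A t₀‖
        + ‖(2⁻¹ : ℝ) • (X ^ 2 - (h ^ 2 / 4) • A t₀ ^ 2)‖ := by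
        rw [key]; exact (norm_add_le _ _).trans (add_le_add_left (norm_add_le _ _) _)
    _ ≤ (n : ℝ) ^ 3 * C₃ ^ 3 * Real.exp (n * C₃) * |h| ^ 3 + C₁ * |h| ^ 3
        + n * C₂ * C₃ * |h| ^ 3 := add_le_add (add_le_add hT1 hgb) hT3
    _ ≤ ((n : ℝ) ^ 3 * C₃ ^ 3 * Real.exp (n * C₃) + C₁ + n * C₂ * C₃ + 1) * |h| ^ 3 := by
        nlinarith [pow_nonneg habs 3]
end

section
/- Let α : ℝ → ℝ, f_d : ℝ × ℝ → ℝ and f_s : ℝ × ℝ × ℝ → ℝ be infinitely differentiable, and define g₀^{(1,1)}(R,V,t) = (0, f_d(R,t)) ∈ ℝ², g₀^{(1,2)}(R,V,t) = (V, −α(t)·V) ∈ ℝ², g₁^{(1,1)}(R,V,t) = (0, f_s(R,V,t)) ∈ ℝ². Assume additionally that f_s does not depend on its second argument V, i.e. (∂f_s/∂V) ≡ 0. Fix (R₀, V₀, t₀) ∈ ℝ³ and set u = (∂²/∂t²) g₀^{(1,2)}(R₀,V₀,t₀), w = D²_{(R,V)} g₁^{(1,1)}(R₀,V₀,t₀)[u,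 g₀^{(1,1)}(R₀,V₀,t₀)]. Then the mixed second derivative of g₀^{(1,2)} with respect to (R,V) and t applied to the directions w and 1 is the zero vector in ℝ²; that is, the elementary differential F(τ*)(x₀) of the tree τ* vanishes identically for this system. -/
/-- If the diffusion intensity `f_s` does not depend on the velocity `V`
(i.e. `∂f_s/∂V ≡ 0`), then the elementary differential `F(τ*)(x₀)` of the tree
`τ* = [[[•_{2,1,0}, •_{2,1,0}]_{1,2,0}, •_{1,1,0}]_{1,1,1}, •_{2,1,0}]_{1,2,0}`
for the Langevin-type system `dR = V dt`,
`dV = (f_d(R,t) − α(t)V) dt + f_s(R,V,t) dW₁(t)` (partitioned with `X⁽¹⁾ = (R,V)`,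
`X⁽²⁾ = t`, `g₀⁽¹'¹⁾(R,V,t) = (0, f_d(R,t))`, `g₀⁽¹'²⁾(R,V,t) = (V, −α(t)V)`,
`g₁⁽¹'¹⁾(R,V,t) = (0, f_s(R,V,t))`, `g₀⁽²'¹⁾ ≡ 1`) vanishes identically. -/
theorem elementary_differential_tauStar_langevin_vanishes
    (α : ℝ → ℝ) (fd : ℝ × ℝ → ℝ) (fs : ℝ × ℝ × ℝ → ℝ)
    (hα : ContDiff ℝ (⊤ : ℕ∞) α) (hfd : ContDiff ℝ (⊤ : ℕ∞) fd) (hfs : ContDiff ℝ (⊤ : ℕ∞) fs)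
    -- `f_s` does not depend on its second argument `V`, i.e. `∂f_s/∂V ≡ 0`:
    (hfsV : ∀ R V t, deriv (fun v => fs (R, v, t)) V = 0)
    (g011 g012 g111 : ℝ × ℝ → ℝ → ℝ × ℝ)
    (hg011 : g011 = fun x t => (0, fd (x.1, t)))
    (hg012 : g012 = fun x t => (x.2, -α t * x.2))
    (hg111 : g111 = fun x t => (0, fs (x.1, x.2, t)))
    (R₀ V₀ t₀ : ℝ) (u w : ℝ × ℝ)
    -- `u = (∂²/∂t²) g₀⁽¹'²⁾(R₀,V₀,t₀)`:
    (hu : u = deriv (fun t => deriv (fun s => g012 (R₀, V₀) s) t) t₀)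
    -- `w = D²_{(R,V)} g₁⁽¹'¹⁾(R₀,V₀,t₀)[u, g₀⁽¹'¹⁾(R₀,V₀,t₀)]`:
    (hw : w = fderiv ℝ (fun x => fderiv ℝ (fun y => g111 y t₀) x) (R₀, V₀) u
                (g011 (R₀, V₀) t₀)) :
    -- the mixed second derivative of `g₀⁽¹'²⁾` w.r.t. `(R,V)` and `t`, applied to the
    -- directions `w` (in `(R,V)`) and `1` (in `t`), is the zero vector:
    deriv (fun t => fderiv ℝ (fun x => g012 x t) (R₀, V₀) w) t₀ = (0, 0) := by
  subst hg011 hg111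
  -- F is the frozen-time diffusion map
  set F : ℝ × ℝ → ℝ × ℝ := fun y => ((0 : ℝ), fs (y.1, y.2, t₀)) with hF
  have hFsm : ContDiff ℝ (⊤ : ℕ∞) F :=
    contDiff_const.prodMk (hfs.comp (contDiff_fst.prodMk (contDiff_snd.prodMk contDiff_const)))
  set e : ℝ × ℝ := ((0 : ℝ), fd (R₀, t₀)) with he
  -- Claim A: the derivative of F in direction e vanishes everywhere
  have hA : ∀ x : ℝ × ℝ, fderiv ℝ F x e = 0 := by
    intro x
    have hdF : DifferentiableAt ℝ F x := (hFsm.differentiable (by simp)).differentiableAt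
    have h01 : fderiv ℝ F x ((0 : ℝ), (1 : ℝ)) = 0 := by
      have hg : HasDerivAt (fun v : ℝ => ((x.1 : ℝ), v)) (((0 : ℝ), (1 : ℝ))) x.2 :=
        (hasDerivAt_const x.2 x.1).prodMk (hasDerivAt_id x.2)
      have h1 : HasDerivAt (fun v => F (x.1, v)) (fderiv ℝ F x ((0 : ℝ), (1 : ℝ))) x.2 := by
        have := hdF.hasFDerivAt.comp_hasDerivAt x.2 (by simpa using hg)
        exact this
      have hdfs : DifferentiableAt ℝ (fun v => fs (x.1, v, t₀)) x.2 :=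
        ((hfs.comp ((contDiff_const : ContDiff ℝ (⊤ : ℕ∞) fun _ : ℝ => x.1).prodMk
          ((contDiff_id).prodMk contDiff_const))).differentiable (by simp)).differentiableAt
      have h2 : HasDerivAt (fun v => F (x.1, v))
          (((0 : ℝ), deriv (fun v => fs (x.1, v, t₀)) x.2)) x.2 :=
        (hasDerivAt_const x.2 (0 : ℝ)).prodMk hdfs.hasDerivAt
      have := h1.unique h2
      rw [this, hfsV]
      rfl
    have : e = fd (R₀, t₀) • ((0 : ℝ), (1 : ℝ)) := by
      simp [he, Prod.smul_mk]
    rw [this, map_smul, h01, smul_zero]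
  -- Claim: w = 0
  have hw0 : w = 0 := by
    have hdh : DifferentiableAt ℝ (fun x => fderiv ℝ F x) (R₀, V₀) := by
      have : ContDiff ℝ (⊤ : ℕ∞) (fderiv ℝ F) := (hFsm.fderiv_right (le_refl _))
      exact (this.differentiable (by simp)).differentiableAt
    set L : (ℝ × ℝ →L[ℝ] ℝ × ℝ) →L[ℝ] ℝ × ℝ :=
      ContinuousLinearMap.apply ℝ (ℝ × ℝ) e with hL
    have hcomp : (fun x => L (fderiv ℝ F x)) = fun _ => (0 : ℝ × ℝ) := by
      funext x; simpa [hL] using hA x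
    have hfd2 : fderiv ℝ (fun x => L (fderiv ℝ F x)) (R₀, V₀) =
        L.comp (fderiv ℝ (fun x => fderiv ℝ F x) (R₀, V₀)) :=
      (L.hasFDerivAt.comp (R₀, V₀) hdh.hasFDerivAt).fderiv
    rw [hcomp] at hfd2
    simp only [fderiv_fun_const] at hfd2
    have : L (fderiv ℝ (fun x => fderiv ℝ F x) (R₀, V₀) u) = 0 := by
      have := congrArg (fun (T : (ℝ × ℝ) →L[ℝ] ℝ × ℝ) => T u) hfd2
      simpa using this.symm
    rw [hw]
    simpa [hL, he] using this
  rw [hw0]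
  simp only [map_zero]
  rw [deriv_const]
  rfl
end
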